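/- Let n ≥ 1 be an integer. Then C(n,2) = ((2n)!/n!)·√(2n+1); that is, every f ∈ 𝒟ⁿ([0,1]) that is not identically zero satisfies m_n(f) ≤ ((2n)!/n!)·√(2n+1) · (∫_0^1 f(t)² dt)^{1/2}, and ((2n)!/n!)·√(2n+1) is the smallest constant with this property. -/

import Mathlib

/-!
Put `V = (x(1-x))ⁿ` and `P = V⁽ⁿ⁾`, which is `n!` times the shifted Legendre polynomial; the
derivatives of `V` of order `< n` vanish at `0` and `1`. Moving `n - 1` derivatives from `P` onto
`f` gives `|∫ f P| = |∫ f⁽ⁿ⁻¹⁾ V'|`. If `m = m_n(f) > 0`, Darboux's theorem forces `f⁽ⁿ⁾` to keep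
one sign, say `f⁽ⁿ⁾ ≥ m`; then `f⁽ⁿ⁻¹⁾ - m x` is increasing, which bounds the last integral by
`m ∫ V` from below. Cauchy–Schwarz gives `|∫ f P| ≤ ‖f‖₂ ‖P‖₂`, and `‖P‖₂² = (2n)! ∫ V` with
`∫ V = (n!)²/(2n+1)!` (a Beta integral), which produces the constant `(2n)!/n! · √(2n+1)`.
It is attained by `f = P`, whose `n`-th derivative is the constant `(-1)ⁿ(2n)!`.
-/

open Set Polynomial Nat MeasureTheory ENNReal

/-- `fd 0` belongs to `𝒟ⁿ([a,b])`, with `fd k` its `k`-th derivative: `fd k` exists and is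
continuous on `[a,b]` for `0 ≤ k ≤ n-1`, and `fd n` is the derivative of `fd (n-1)` on `(a,b)`. -/
def IsDn (n : ℕ) (a b : ℝ) (fd : ℕ → ℝ → ℝ) : Prop :=
  (∀ k, k + 1 < n → ∀ x ∈ Set.Icc a b, HasDerivWithinAt (fd k) (fd (k + 1) x) (Set.Icc a b) x) ∧
  ContinuousOn (fd (n - 1)) (Set.Icc a b) ∧
  (∀ x ∈ Set.Ioo a b, HasDerivAt (fd (n - 1)) (fd n x) x)

/-- `m_n(f) = inf_{a<t<b} |f^{(n)}(t)|`. -/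
noncomputable def mIoo (n : ℕ) (a b : ℝ) (fd : ℕ → ℝ → ℝ) : ℝ :=
  sInf ((fun t => |fd n t|) '' Set.Ioo a b)

/-- `‖f‖_{p,[a,b]}` for `0 < p < ∞`. -/
noncomputable def Lp (p a b : ℝ) (f : ℝ → ℝ) : ℝ :=
  (∫ t in a..b, |f t| ^ p) ^ (1 / p)

/-- `‖f‖_{∞,[a,b]}`. -/
noncomputable def Lsup (a b : ℝ) (f : ℝ → ℝ) : ℝ :=
  sSup ((fun t => |f t|) '' Set.Icc a b)

/-- `‖f‖_{p,[a,b]}` for `0 < p ≤ ∞`. -/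
noncomputable def pnorm (p : ℝ≥0∞) (a b : ℝ) (f : ℝ → ℝ) : ℝ :=
  if p = ⊤ then Lsup a b f else Lp p.toReal a b f

/-- `D**(n,p,[a,b])`, `p` finite. -/
noncomputable def Dstar (n : ℕ) (p a b : ℝ) : ℝ :=
  sInf { c | ∃ Q : Polynomial ℝ, Q.Monic ∧ Q.natDegree = n ∧ c = Lp p a b (fun x => Q.eval x) }

/-- `D**(n,∞,[a,b])`. -/
noncomputable def DstarInf (n : ℕ) (a b : ℝ) : ℝ :=
  sInf { c | ∃ Q : Polynomial ℝ, Q.Monic ∧ Q.natDegree = n ∧ c = Lsup a b (fun x => Q.eval x) }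

/-- `C(n,p)`, `p` finite. -/
noncomputable def Cnp (n : ℕ) (p : ℝ) : ℝ :=
  sSup { c | ∃ fd : ℕ → ℝ → ℝ, IsDn n 0 1 fd ∧ (∃ x ∈ Set.Icc (0:ℝ) 1, fd 0 x ≠ 0) ∧
    c = mIoo n 0 1 fd / Lp p 0 1 (fd 0) }

/-- `C(n,∞)`. -/
noncomputable def CnpInf (n : ℕ) : ℝ :=
  sSup { c | ∃ fd : ℕ → ℝ → ℝ, IsDn n 0 1 fd ∧ (∃ x ∈ Set.Icc (0:ℝ) 1, fd 0 x ≠ 0) ∧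
    c = mIoo n 0 1 fd / Lsup 0 1 (fd 0) }

section IntervalCalculus

variable {a b : ℝ}

theorem abs_intervalIntegral_mul_le_sqrt_mul_sqrt (hab : a ≤ b) {f g : ℝ → ℝ}
    (hf : IntervalIntegrable (fun x => f x ^ 2) volume a b)
    (hg : IntervalIntegrable (fun x => g x ^ 2) volume a b)
    (hfg : IntervalIntegrable (fun x => f x * g x) volume a b) :
    |∫ x in a..b, f x * g x| ≤ √(∫ x in a..b, f x ^ 2) * √(∫ x in a..b, g x ^ 2) := by
  set A := ∫ x in a..b, f x ^ 2
  set B := ∫ x in a..b, g x ^ 2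
  set T := ∫ x in a..b, f x * g x
  have hquad : ∀ s : ℝ, 0 ≤ B * (s * s) + 2 * T * s + A := by
    intro s
    have hexpand : ∫ x in a..b, (f x + s * g x) ^ 2 = B * (s * s) + 2 * T * s + A := by
      have hpt : ∀ x, (f x + s * g x) ^ 2 = s * s * g x ^ 2 + 2 * s * (f x * g x) + f x ^ 2 :=
        fun x => by ring
      simp_rw [hpt]
      rw [intervalIntegral.integral_add ((hg.const_mul _).add (hfg.const_mul _)) hf,
        intervalIntegral.integral_add (hg.const_mul _) (hfg.const_mul _),
        intervalIntegral.integral_const_mul, intervalIntegral.integral_const_mul]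
      ring
    exact hexpand ▸ intervalIntegral.integral_nonneg hab fun x _ => sq_nonneg _
  have hdiscrim := discrim_le_zero hquad
  rw [discrim] at hdiscrim
  have hA : 0 ≤ A := intervalIntegral.integral_nonneg hab fun x _ => sq_nonneg _
  rw [← Real.sqrt_mul hA]
  exact Real.abs_le_sqrt (by nlinarith)

theorem integral_mul_derivative_eval_eq_neg (hab : a ≤ b) {u u' : ℝ → ℝ}
    (hu : ContinuousOn u (Icc a b)) (hu' : ContinuousOn u' (Icc a b))
    (hderiv : ∀ x ∈ Ioo a b, HasDerivAt u (u' x) x) {Q : ℝ[X]}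
    (ha : Q.eval a = 0) (hb : Q.eval b = 0) :
    ∫ x in a..b, u x * (derivative Q).eval x = -∫ x in a..b, u' x * Q.eval x := by
  rw [← uIcc_of_le hab] at hu hu'
  rw [intervalIntegral.integral_mul_deriv_eq_deriv_mul_of_hasDerivAt hu
    Q.continuous.continuousOn (by simpa [hab] using hderiv) (fun x _ => Q.hasDerivAt x)
    (hu'.intervalIntegrable) ((derivative Q).continuous.intervalIntegrable a b), ha, hb]
  ring

theorem integral_mul_iterate_derivative_eval (hab : a ≤ b) {u : ℕ → ℝ → ℝ} {k : ℕ}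
    (hu : ∀ j ≤ k, ContinuousOn (u j) (Icc a b))
    (hderiv : ∀ j < k, ∀ x ∈ Ioo a b, HasDerivAt (u j) (u (j + 1) x) x) {W : ℝ[X]}
    (hW : ∀ j < k, (derivative^[j] W).eval a = 0 ∧ (derivative^[j] W).eval b = 0) :
    ∫ x in a..b, u 0 x * (derivative^[k] W).eval x
      = (-1) ^ k * ∫ x in a..b, u k x * W.eval x := by
  induction k generalizing W with
  | zero => simp
  | succ k ih =>
    obtain ⟨hWa, hWb⟩ : W.eval a = 0 ∧ W.eval b = 0 := hW 0 (by omega)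
    rw [Function.iterate_succ_apply, ih (fun j hj => hu j (by omega))
      (fun j hj => hderiv j (by omega)) (fun j hj => by
        simpa only [← Function.iterate_succ_apply] using hW (j + 1) (by omega)),
      integral_mul_derivative_eval_eq_neg hab (hu k (by omega)) (hu (k + 1) le_rfl)
        (hderiv k (by omega)) hWa hWb]
    ring

-- `h V` vanishes at both ends and `(h V)' = h' V + h V' ≥ h V'`.
theorem integral_mul_derivative_eval_nonpos (hab : a ≤ b) {h h' : ℝ → ℝ}
    (hh : ContinuousOn h (Icc a b)) (hderiv : ∀ x ∈ Ioo a b, HasDerivAt h (h' x) x)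
    (hh' : ∀ x ∈ Ioo a b, 0 ≤ h' x) {V : ℝ[X]} (ha : V.eval a = 0) (hb : V.eval b = 0)
    (hV : ∀ x ∈ Icc a b, 0 ≤ V.eval x) :
    ∫ x in a..b, h x * (derivative V).eval x ≤ 0 := by
  have hle := intervalIntegral.integral_le_sub_of_hasDeriv_right_of_le hab
    (hh.mul V.continuous.continuousOn)
    (fun x hx => ((hderiv x hx).mul (V.hasDerivAt x)).hasDerivWithinAt)
    (hh.mul (derivative V).continuous.continuousOn).integrableOn_Icc
    (fun x hx => le_add_of_nonneg_left (mul_nonneg (hh' x hx) (hV x (Ioo_subset_Icc_self hx))))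
  simpa [ha, hb] using hle

theorem integral_mul_derivative_eval_le (hab : a ≤ b) {g g' : ℝ → ℝ} {m : ℝ}
    (hg : ContinuousOn g (Icc a b)) (hderiv : ∀ x ∈ Ioo a b, HasDerivAt g (g' x) x)
    (hm : ∀ x ∈ Ioo a b, m ≤ g' x) {V : ℝ[X]} (ha : V.eval a = 0) (hb : V.eval b = 0)
    (hV : ∀ x ∈ Icc a b, 0 ≤ V.eval x) :
    ∫ x in a..b, g x * (derivative V).eval x ≤ -(m * ∫ x in a..b, V.eval x) := by
  have hcont : ContinuousOn (fun x => g x - m * x) (Icc a b) := by fun_prop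
  have hnonpos : ∫ x in a..b, (g x - m * x) * (derivative V).eval x ≤ 0 :=
    integral_mul_derivative_eval_nonpos hab hcont
    (fun x hx => (hderiv x hx).sub ((hasDerivAt_id x).const_mul m))
    (fun x hx => by simpa using hm x hx) ha hb hV
  have hlinear : ∫ x in a..b, x * (derivative V).eval x = -∫ x in a..b, V.eval x := by
    simpa using integral_mul_derivative_eval_eq_neg hab continuousOn_id continuousOn_const
      (fun x _ => hasDerivAt_id x) ha hb
  have hsplit : ∫ x in a..b, g x * (derivative V).eval x
      = (∫ x in a..b, (g x - m * x) * (derivative V).eval x)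
        + m * ∫ x in a..b, x * (derivative V).eval x := by
    have hint : IntervalIntegrable (fun x => (g x - m * x) * (derivative V).eval x) volume a b :=
      (hcont.mul (derivative V).continuous.continuousOn).intervalIntegrable_of_Icc hab
    have hint' : IntervalIntegrable (fun x => m * (x * (derivative V).eval x)) volume a b :=
      (by fun_prop : Continuous fun x => m * (x * (derivative V).eval x)).intervalIntegrable a b
    rw [← intervalIntegral.integral_const_mul, ← intervalIntegral.integral_add hint hint']
    exact intervalIntegral.integral_congr fun x _ => by ring
  rw [hsplit, hlinear]
  linarith

theorem mul_integral_le_abs_integral_mul_derivative_eval (hab : a ≤ b) {g g' : ℝ → ℝ} {m : ℝ}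
    (hg : ContinuousOn g (Icc a b)) (hderiv : ∀ x ∈ Ioo a b, HasDerivAt g (g' x) x)
    (hm : ∀ x ∈ Ioo a b, m ≤ |g' x|) {V : ℝ[X]} (ha : V.eval a = 0) (hb : V.eval b = 0)
    (hV : ∀ x ∈ Icc a b, 0 ≤ V.eval x) :
    m * ∫ x in a..b, V.eval x ≤ |∫ x in a..b, g x * (derivative V).eval x| := by
  rcases le_or_gt m 0 with hm0 | hm0
  · exact (mul_nonpos_of_nonpos_of_nonneg hm0
      (intervalIntegral.integral_nonneg hab hV)).trans (abs_nonneg _)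
  rcases hasDerivWithinAt_forall_lt_or_forall_gt_of_forall_ne (convex_Ioo a b)
    (fun x hx => (hderiv x hx).hasDerivWithinAt) (m := 0)
    (fun x hx h0 => by simpa [h0] using hm0.trans_le (hm x hx)) with hneg | hpos
  · have hle := integral_mul_derivative_eval_le hab hg.neg (fun x hx => (hderiv x hx).neg)
      (fun x hx => by linarith [abs_of_neg (hneg x hx) ▸ hm x hx]) ha hb hV
    simp only [Pi.neg_apply, neg_mul, intervalIntegral.integral_neg] at hle
    exact (neg_le_neg_iff.mp hle).trans (le_abs_self _)
  · have hle := integral_mul_derivative_eval_le hab hg hderiv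
      (fun x hx => abs_of_pos (hpos x hx) ▸ hm x hx) ha hb hV
    exact (le_neg.mp hle).trans (neg_le_abs _)

end IntervalCalculus

namespace IsDn

variable {n : ℕ} {a b : ℝ} {fd : ℕ → ℝ → ℝ}

theorem continuousOn (h : IsDn n a b fd) {k : ℕ} (hk : k ≤ n - 1) :
    ContinuousOn (fd k) (Icc a b) := by
  rcases hk.eq_or_lt with rfl | hlt
  · exact h.2.1
  · exact fun x hx => (h.1 k (by omega) x hx).continuousWithinAt

theorem hasDerivAt (h : IsDn n a b fd) {k : ℕ} (hk : k < n) {x : ℝ} (hx : x ∈ Ioo a b) :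
    HasDerivAt (fd k) (fd (k + 1) x) x := by
  rcases (Nat.le_sub_one_of_lt hk).eq_or_lt with rfl | hlt
  · simpa [Nat.sub_add_cancel (Nat.one_le_of_lt hk)] using h.2.2 x hx
  · exact (h.1 k (by omega) x (Ioo_subset_Icc_self hx)).hasDerivAt (Icc_mem_nhds hx.1 hx.2)

end IsDn

theorem isDn_iterate_derivative_eval {n : ℕ} (hn : 1 ≤ n) (P : ℝ[X]) (a b : ℝ) :
    IsDn n a b (fun k x => (derivative^[k] P).eval x) := by
  refine ⟨fun k _ x _ => ?_, (derivative^[n - 1] P).continuous.continuousOn, fun x _ => ?_⟩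
  · simpa only [Function.iterate_succ_apply'] using
      ((derivative^[k] P).hasDerivAt x).hasDerivWithinAt
  · have := (derivative^[n - 1] P).hasDerivAt x
    rwa [← Function.iterate_succ_apply' derivative, Nat.succ_eq_add_one,
      Nat.sub_add_cancel hn] at this

theorem mIoo_le_abs {n : ℕ} {a b : ℝ} (fd : ℕ → ℝ → ℝ) {t : ℝ} (ht : t ∈ Ioo a b) :
    mIoo n a b fd ≤ |fd n t| :=
  csInf_le ⟨0, by rintro _ ⟨_, _, rfl⟩; exact abs_nonneg _⟩ ⟨t, ht, rfl⟩

theorem mIoo_eq_of_forall_abs_eq {n : ℕ} {a b c : ℝ} (hab : a < b) {fd : ℕ → ℝ → ℝ}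
    (hc : ∀ t ∈ Ioo a b, |fd n t| = c) : mIoo n a b fd = c := by
  rw [mIoo, image_congr hc, (nonempty_Ioo.mpr hab).image_const, csInf_singleton]

theorem Polynomial.iterate_derivative_natDegree {R : Type*} [CommSemiring R] (p : R[X]) :
    derivative^[p.natDegree] p = C ((p.natDegree ! : R) * p.leadingCoeff) := by
  have hdeg : (derivative^[p.natDegree] p).natDegree = 0 := by
    have := natDegree_iterate_derivative p p.natDegree
    omega
  rw [eq_C_of_natDegree_eq_zero hdeg, coeff_iterate_derivative, zero_add,
    Nat.descFactorial_self, nsmul_eq_mul, leadingCoeff]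

theorem integral_pow_mul_one_sub_pow (a b : ℕ) :
    ∫ x in (0:ℝ)..1, x ^ a * (1 - x) ^ b = (a ! * b ! / (a + b + 1)! : ℝ) := by
  have hbeta := Complex.Gamma_mul_Gamma_eq_betaIntegral (s := a + 1) (t := b + 1)
    (by simp; positivity) (by simp; positivity)
  have hreal : Complex.betaIntegral (a + 1) (b + 1)
      = ((∫ x in (0:ℝ)..1, x ^ a * (1 - x) ^ b : ℝ) : ℂ) := by
    rw [Complex.betaIntegral, ← intervalIntegral.integral_ofReal]
    refine intervalIntegral.integral_congr fun x _ => ?_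
    simp only [add_sub_cancel_right, Complex.cpow_natCast]
    push_cast
    rfl
  rw [hreal, show (a + 1 : ℂ) + (b + 1) = ((a + b + 1 : ℕ) : ℂ) + 1 by push_cast; ring,
    Complex.Gamma_nat_eq_factorial, Complex.Gamma_nat_eq_factorial,
    Complex.Gamma_nat_eq_factorial] at hbeta
  rw [_root_.eq_div_iff (by positivity)]
  exact_mod_cast (hbeta.trans (mul_comm _ _)).symm

noncomputable def legendreWeight (n : ℕ) : ℝ[X] := (X * (1 - X)) ^ n

theorem legendreWeight_eval (n : ℕ) (x : ℝ) :
    (legendreWeight n).eval x = x ^ n * (1 - x) ^ n := by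
  simp [legendreWeight, mul_pow]

theorem legendreWeight_eval_nonneg (n : ℕ) {x : ℝ} (hx : x ∈ Icc (0:ℝ) 1) :
    0 ≤ (legendreWeight n).eval x := by
  have : 0 ≤ 1 - x := sub_nonneg.mpr hx.2
  rw [legendreWeight_eval]
  exact mul_nonneg (pow_nonneg hx.1 n) (pow_nonneg this n)

theorem iterate_derivative_legendreWeight_eval_eq_zero {n k : ℕ} (hk : k < n) :
    (derivative^[k] (legendreWeight n)).eval 0 = 0 ∧
      (derivative^[k] (legendreWeight n)).eval 1 = 0 := by
  obtain ⟨r, hr⟩ := pow_sub_dvd_iterate_derivative_pow (X * (1 - X) : ℝ[X]) n k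
  simp [legendreWeight, hr, Nat.sub_ne_zero_of_lt hk]

theorem iterate_derivative_two_mul_legendreWeight (n : ℕ) :
    derivative^[2 * n] (legendreWeight n) = C (((2 * n)! : ℝ) * (-1) ^ n) := by
  have hquad : (X * (1 - X) : ℝ[X]) = C (-1) * X ^ 2 + C 1 * X + C 0 := by
    simp only [map_neg, map_one, map_zero]
    ring
  have hdeg : (legendreWeight n).natDegree = 2 * n := by
    rw [legendreWeight, natDegree_pow, hquad, natDegree_quadratic (by norm_num), mul_comm]
  have hlead : (legendreWeight n).leadingCoeff = (-1) ^ n := by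
    rw [legendreWeight, leadingCoeff_pow, hquad, leadingCoeff_quadratic (by norm_num)]
  rw [← hdeg, iterate_derivative_natDegree, hlead, hdeg]

theorem integral_legendreWeight (n : ℕ) :
    ∫ x in (0:ℝ)..1, (legendreWeight n).eval x = (n ! * n ! / (2 * n + 1)! : ℝ) := by
  simp only [legendreWeight_eval, integral_pow_mul_one_sub_pow, two_mul]

theorem integral_legendreWeight_pos (n : ℕ) :
    0 < ∫ x in (0:ℝ)..1, (legendreWeight n).eval x := by
  rw [integral_legendreWeight]
  positivity

theorem integral_sq_iterate_derivative_legendreWeight (n : ℕ) :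
    ∫ x in (0:ℝ)..1, ((derivative^[n] (legendreWeight n)).eval x) ^ 2
      = (2 * n)! * ∫ x in (0:ℝ)..1, (legendreWeight n).eval x := by
  set P := derivative^[n] (legendreWeight n)
  have hibp := integral_mul_iterate_derivative_eval zero_le_one
    (u := fun j x => (derivative^[j] P).eval x) (k := n)
    (fun j _ => (derivative^[j] P).continuous.continuousOn)
    (fun j _ x _ => by simpa only [Function.iterate_succ_apply'] using
      (derivative^[j] P).hasDerivAt x)
    (fun j hj => iterate_derivative_legendreWeight_eval_eq_zero hj)
  have hP2n : derivative^[n] P = C (((2 * n)! : ℝ) * (-1) ^ n) := by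
    rw [← Function.iterate_add_apply, ← two_mul, iterate_derivative_two_mul_legendreWeight]
  simp only [Function.iterate_zero_apply, hP2n, eval_C] at hibp
  rw [← intervalIntegral.integral_const_mul]
  simp_rw [sq]
  rw [hibp, ← intervalIntegral.integral_const_mul]
  refine intervalIntegral.integral_congr fun x _ => ?_
  have hsign : ((-1 : ℝ) ^ n) * (-1) ^ n = 1 := by rw [← mul_pow]; norm_num
  linear_combination ((2 * n)! * (legendreWeight n).eval x) * hsign

theorem sq_mul_integral_legendreWeight (n : ℕ) :
    ((((2 * n)! : ℝ) / (n ! : ℝ)) * Real.sqrt (2 * n + 1)) ^ 2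
      * ∫ x in (0:ℝ)..1, (legendreWeight n).eval x = (2 * n)! := by
  rw [integral_legendreWeight, mul_pow, Real.sq_sqrt (by positivity),
    show 2 * n + 1 = (2 * n).succ from rfl, Nat.factorial_succ]
  push_cast
  field_simp

theorem mIoo_le_of_isDn {n : ℕ} (hn : 1 ≤ n) {fd : ℕ → ℝ → ℝ} (h : IsDn n 0 1 fd) :
    mIoo n 0 1 fd ≤ (((2 * n)! : ℝ) / (n ! : ℝ)) * Real.sqrt (2 * n + 1) *
      Real.sqrt (∫ t in (0:ℝ)..1, (fd 0 t) ^ 2) := by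
  set V := legendreWeight n
  set P := derivative^[n] V
  set I := ∫ x in (0:ℝ)..1, V.eval x
  set K := (((2 * n)! : ℝ) / (n ! : ℝ)) * Real.sqrt (2 * n + 1)
  have hI : 0 < I := integral_legendreWeight_pos n
  have hlower : mIoo n 0 1 fd * I ≤ |∫ x in (0:ℝ)..1, fd 0 x * P.eval x| := by
    have hibp := integral_mul_iterate_derivative_eval zero_le_one (k := n - 1)
      (fun j hj => h.continuousOn hj) (fun j hj x hx => h.hasDerivAt (by omega) hx)
      (W := derivative V) fun j hj => by
        simpa only [← Function.iterate_succ_apply] using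
          iterate_derivative_legendreWeight_eval_eq_zero (k := j + 1) (by omega)
    rw [← Function.iterate_succ_apply, Nat.succ_eq_add_one, Nat.sub_add_cancel hn] at hibp
    rw [hibp, abs_mul, abs_pow, abs_neg, abs_one, one_pow, one_mul]
    exact mul_integral_le_abs_integral_mul_derivative_eval zero_le_one (h.continuousOn le_rfl)
      (fun x hx => Nat.sub_add_cancel hn ▸ h.hasDerivAt (by omega) hx)
      (fun x hx => mIoo_le_abs fd hx) (iterate_derivative_legendreWeight_eval_eq_zero hn).1
      (iterate_derivative_legendreWeight_eval_eq_zero hn).2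
      fun x hx => legendreWeight_eval_nonneg n hx
  have hupper : |∫ x in (0:ℝ)..1, fd 0 x * P.eval x|
      ≤ Real.sqrt (∫ t in (0:ℝ)..1, (fd 0 t) ^ 2) * (K * I) := by
    have hf := h.continuousOn (Nat.zero_le _)
    have hP := P.continuous.continuousOn (s := Icc 0 1)
    calc _ ≤ Real.sqrt (∫ t in (0:ℝ)..1, (fd 0 t) ^ 2)
          * Real.sqrt (∫ t in (0:ℝ)..1, (P.eval t) ^ 2) :=
          abs_intervalIntegral_mul_le_sqrt_mul_sqrt zero_le_one
            ((hf.pow 2).intervalIntegrable_of_Icc zero_le_one)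
            ((hP.pow 2).intervalIntegrable_of_Icc zero_le_one)
            ((hf.mul hP).intervalIntegrable_of_Icc zero_le_one)
      _ = _ := by
        rw [integral_sq_iterate_derivative_legendreWeight, ← sq_mul_integral_legendreWeight,
          show K ^ 2 * I * I = (K * I) ^ 2 by ring, Real.sqrt_sq (by positivity)]
  exact le_of_mul_le_mul_right ((hlower.trans hupper).trans_eq (by ring)) hI

theorem le_of_forall_mIoo_le {n : ℕ} (hn : 1 ≤ n) {C : ℝ}
    (hC : ∀ fd : ℕ → ℝ → ℝ, IsDn n 0 1 fd → (∃ x ∈ Icc (0:ℝ) 1, fd 0 x ≠ 0) →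
      mIoo n 0 1 fd ≤ C * Real.sqrt (∫ t in (0:ℝ)..1, (fd 0 t) ^ 2)) :
    (((2 * n)! : ℝ) / (n ! : ℝ)) * Real.sqrt (2 * n + 1) ≤ C := by
  set V := legendreWeight n
  set P := derivative^[n] V
  set I := ∫ x in (0:ℝ)..1, V.eval x
  set K := (((2 * n)! : ℝ) / (n ! : ℝ)) * Real.sqrt (2 * n + 1)
  set fd : ℕ → ℝ → ℝ := fun k x => (derivative^[k] P).eval x
  have hKI : 0 < K * I :=
    mul_pos (by positivity : 0 < (((2 * n)! : ℝ) / (n ! : ℝ)) * Real.sqrt (2 * n + 1))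
      (integral_legendreWeight_pos n)
  have hnorm : ∫ t in (0:ℝ)..1, (fd 0 t) ^ 2 = (K * I) ^ 2 := by
    rw [show (K * I) ^ 2 = K ^ 2 * I * I by ring, sq_mul_integral_legendreWeight,
      ← integral_sq_iterate_derivative_legendreWeight]
    rfl
  have hm : mIoo n 0 1 fd = (2 * n)! := by
    refine mIoo_eq_of_forall_abs_eq zero_lt_one fun t _ => ?_
    simp only [fd, P, V, ← Function.iterate_add_apply, ← two_mul,
      iterate_derivative_two_mul_legendreWeight, eval_C, abs_mul, abs_pow, abs_neg, abs_one,
      one_pow, mul_one, Nat.abs_cast]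
  have hne : ∃ x ∈ Icc (0:ℝ) 1, fd 0 x ≠ 0 := by
    by_contra! hzero
    have : ∫ t in (0:ℝ)..1, (fd 0 t) ^ 2 = 0 := by
      rw [intervalIntegral.integral_congr (g := fun _ => 0) fun x hx => by
        simp [hzero x (uIcc_of_le (zero_le_one' ℝ) ▸ hx)]]
      simp
    exact (pow_pos hKI 2).ne' (hnorm ▸ this)
  have hbound := hC fd (isDn_iterate_derivative_eval hn P 0 1) hne
  rw [hm, hnorm, Real.sqrt_sq hKI.le, ← sq_mul_integral_legendreWeight n] at hbound
  exact le_of_mul_le_mul_right (hbound.trans_eq' (by ring)) hKI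

/-- `C(n,2) = ((2n)!/n!)·√(2n+1)`: every not-identically-zero `f ∈ 𝒟ⁿ([0,1])` satisfies
`m_n(f) ≤ ((2n)!/n!)·√(2n+1)·(∫_0^1 f²)^{1/2}`, and this constant is smallest. -/
theorem stmt11 (n : ℕ) (hn : 1 ≤ n) :
    (∀ fd : ℕ → ℝ → ℝ, IsDn n 0 1 fd → (∃ x ∈ Set.Icc (0:ℝ) 1, fd 0 x ≠ 0) →
      mIoo n 0 1 fd ≤ (((2 * n)! : ℝ) / (n ! : ℝ)) * Real.sqrt (2 * n + 1) *
        Real.sqrt (∫ t in (0:ℝ)..1, (fd 0 t) ^ 2)) ∧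
    (∀ C : ℝ, (∀ fd : ℕ → ℝ → ℝ, IsDn n 0 1 fd → (∃ x ∈ Set.Icc (0:ℝ) 1, fd 0 x ≠ 0) →
        mIoo n 0 1 fd ≤ C * Real.sqrt (∫ t in (0:ℝ)..1, (fd 0 t) ^ 2)) →
      (((2 * n)! : ℝ) / (n ! : ℝ)) * Real.sqrt (2 * n + 1) ≤ C) :=
  ⟨fun _ h _ => mIoo_le_of_isDn hn h, fun _ hC => le_of_forall_mIoo_le hn hC⟩
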